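/- arXiv:1806.01371 — 5 statements merged into one kernel-verified Lean document; each statement's English description precedes it below -/
import Mathlib

section
/- Let (u_k) be a sequence in H^{α/2}(𝕋ⁿ) with ‖u_k‖_{L²} = 1 and ∬_{|x−y|<R₀} |u_k(x)−u_k(y)|²/|x−y|^{n+α} dx dy → 0, where 0 < α < 2 and R₀ > 0. Then, along a subsequence, u_k converges strongly in L²(𝕋ⁿ) to a constant function u* with |u*| = 1. -/
/-!
The compact embedding `H^{α/2} ↪ L²` is replaced by a Poincaré inequality
`Var u ≤ M · E_R(u)` for the localized energy `E_R`. Averages of `u` over balls of a small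
radius `ρ` are `L²`-close to `u`, averages over balls with centres at distance `≤ ρ` differ by
at most `√E_R / vol(B_ρ)`, and any two points of the torus are joined by `N ≈ 1/ρ` such steps.
Hence `Var u_k → 0`. As `∫ u_k² = 1`, the means `m_k` satisfy `m_k² = 1 - Var u_k → 1`; along a
subsequence `m_k → c` with `|c| = 1`, and `∫ (u_k - c)² = Var u_k + (m_k - c)² → 0`.
-/

open MeasureTheory Filter Topology

instance : Fact ((0:ℝ) < 1) := ⟨one_pos⟩

open Metric ProbabilityTheory
open scoped ENNReal

theorem sq_setAverage_sub_le {X : Type*} [MeasurableSpace X] {μ : Measure X} {t : Set X}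
    (h0 : μ t ≠ 0) (ht : μ t ≠ ∞) {f : X → ℝ} (hf : MemLp f 2 (μ.restrict t)) (c : ℝ) :
    (⨍ x in t, f x ∂μ - c) ^ 2 ≤ ⨍ x in t, (f x - c) ^ 2 ∂μ := by
  have : Fact (μ t < ∞) := ⟨ht.lt_top⟩
  have hconv : ConvexOn ℝ Set.univ (fun x : ℝ => (x - c) ^ 2) := by
    simpa [Function.comp_def, sub_eq_neg_add] using
      (even_two.convexOn_pow (𝕜 := ℝ)).translate_right (-c)
  exact hconv.map_set_average_le (by fun_prop) isClosed_univ h0 ht (by simp)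
    (hf.integrable one_le_two) (hf.sub (memLp_const c)).integrable_sq

section Variance

variable {Ω : Type*} [MeasurableSpace Ω] {μ : Measure Ω} [IsProbabilityMeasure μ]

theorem integral_sub_const_sq {X : Ω → ℝ} (hX : MemLp X 2 μ) (c : ℝ) :
    ∫ ω, (X ω - c) ^ 2 ∂μ = Var[X; μ] + (μ[X] - c) ^ 2 := by
  have hXc : MemLp (fun ω => X ω - c) 2 μ := hX.sub (memLp_const c)
  rw [← variance_sub_const hX.aestronglyMeasurable c, variance_eq_sub hXc,
    integral_sub (hX.integrable one_le_two) (integrable_const c)]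
  simp

theorem variance_le_integral_sub_const_sq {X : Ω → ℝ} (hX : MemLp X 2 μ) (c : ℝ) :
    Var[X; μ] ≤ ∫ ω, (X ω - c) ^ 2 ∂μ := by
  rw [integral_sub_const_sq hX c]
  exact le_add_of_nonneg_right (sq_nonneg _)

theorem exists_subseq_tendsto_integral_sub_const_sq {X : ℕ → Ω → ℝ}
    (hX : ∀ k, MemLp (X k) 2 μ) (h2 : ∀ k, ∫ ω, X k ω ^ 2 ∂μ = 1)
    (hvar : Tendsto (fun k => Var[X k; μ]) atTop (𝓝 0)) :
    ∃ σ : ℕ → ℕ, StrictMono σ ∧ ∃ c : ℝ, |c| = 1 ∧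
      Tendsto (fun k => ∫ ω, (X (σ k) ω - c) ^ 2 ∂μ) atTop (𝓝 0) := by
  set m : ℕ → ℝ := fun k => μ[X k]
  have hm : ∀ k, m k ^ 2 = 1 - Var[X k; μ] := fun k => by
    have := integral_sub_const_sq (hX k) 0
    simp only [sub_zero, h2] at this
    linarith
  have hm_mem : ∀ k, m k ∈ Set.Icc (-1 : ℝ) 1 := fun k => by
    have : m k ^ 2 ≤ 1 ^ 2 := by linarith [hm k, variance_nonneg (X k) μ]
    exact abs_le_of_sq_le_sq' this zero_le_one
  obtain ⟨c, -, σ, hσ, hmc⟩ := isCompact_Icc.tendsto_subseq hm_mem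
  have hvarσ := hvar.comp hσ.tendsto_atTop
  have hc : c ^ 2 = 1 := by
    refine tendsto_nhds_unique (hmc.pow 2) ?_
    simpa [Function.comp_def, hm] using (tendsto_const_nhds (x := (1 : ℝ))).sub hvarσ
  refine ⟨σ, hσ, c, by simpa using (sq_eq_sq_iff_abs_eq_abs c 1).1 (by simpa using hc), ?_⟩
  simp_rw [integral_sub_const_sq (hX _)]
  simpa using hvarσ.add ((hmc.sub_const c).pow 2)

end Variance

section LocalEnergy

variable {X : Type*} [MetricSpace X]

theorem sq_sub_le_div_dist_rpow {s : ℝ} (hs : 0 ≤ s) (u : X → ℝ) {a b : X}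
    (hab : dist a b ≤ 1) : (u a - u b) ^ 2 ≤ (u a - u b) ^ 2 / dist a b ^ s := by
  rcases eq_or_ne a b with rfl | hne
  · simp
  exact le_div_self (sq_nonneg _) (Real.rpow_pos_of_pos (dist_pos.2 hne) s)
    (Real.rpow_le_one dist_nonneg hab hs)

variable [MeasurableSpace X] {μ : Measure X}

noncomputable def localEnergy (μ : Measure X) (s R : ℝ) (u : X → ℝ) : ℝ :=
  ∫ x, ∫ y in {y | dist x y < R}, (u x - u y) ^ 2 / dist x y ^ s ∂μ ∂μ

theorem localEnergy_nonneg (μ : Measure X) (s R : ℝ) (u : X → ℝ) : 0 ≤ localEnergy μ s R u :=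
  integral_nonneg fun _ => integral_nonneg fun _ => by positivity

variable [OpensMeasurableSpace X]

theorem measurableSet_dist_lt (a : X) (R : ℝ) : MeasurableSet {b | dist a b < R} :=
  measurableSet_lt (continuous_const.dist continuous_id).measurable measurable_const

theorem integrable_setIntegral_dist_lt [SecondCountableTopology X] [SFinite μ]
    {f : X × X → ℝ} (hf : Integrable f (μ.prod μ)) (R : ℝ) :
    Integrable (fun x => ∫ y in {y | dist x y < R}, f (x, y) ∂μ) μ := by
  have hS : MeasurableSet {p : X × X | dist p.1 p.2 < R} :=
    measurableSet_lt (continuous_fst.dist continuous_snd).measurable measurable_const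
  refine (hf.indicator hS).integral_prod_left.congr (Eventually.of_forall fun x => ?_)
  dsimp only
  rw [← integral_indicator (measurableSet_dist_lt x R)]
  rfl

theorem sq_sub_setAverage_ball_le [IsFiniteMeasure μ] {s R ρ : ℝ} (hs : 0 ≤ s) {u : X → ℝ}
    (hu : MemLp u 2 μ) {a y : X}
    (hq : IntegrableOn (fun b => (u a - u b) ^ 2 / dist a b ^ s) {b | dist a b < R} μ)
    (hball : μ (ball y ρ) ≠ 0) (hR : dist a y + ρ ≤ R) (h1 : dist a y + ρ ≤ 1) :
    (u a - ⨍ b in ball y ρ, u b ∂μ) ^ 2 ≤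
      (∫ b in {b | dist a b < R}, (u a - u b) ^ 2 / dist a b ^ s ∂μ) / μ.real (ball y ρ) := by
  have hsub : ∀ b ∈ ball y ρ, dist a b < dist a y + ρ := fun b hb =>
    (dist_triangle a y b).trans_lt (by linarith [mem_ball'.1 hb])
  have hsq : IntegrableOn (fun b => (u a - u b) ^ 2) (ball y ρ) μ :=
    ((memLp_const (u a)).sub hu).integrable_sq.integrableOn
  calc (u a - ⨍ b in ball y ρ, u b ∂μ) ^ 2
      = (⨍ b in ball y ρ, u b ∂μ - u a) ^ 2 := sub_sq_comm _ _
    _ ≤ ⨍ b in ball y ρ, (u b - u a) ^ 2 ∂μ :=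
        sq_setAverage_sub_le hball (measure_ne_top μ _) (hu.restrict _) (u a)
    _ = (∫ b in ball y ρ, (u a - u b) ^ 2 ∂μ) / μ.real (ball y ρ) := by
        simp_rw [setAverage_eq, smul_eq_mul, sub_sq_comm (u _) (u a)]
        rw [inv_mul_eq_div]
    _ ≤ (∫ b in ball y ρ, (u a - u b) ^ 2 / dist a b ^ s ∂μ) / μ.real (ball y ρ) := by
        refine div_le_div_of_nonneg_right ?_ measureReal_nonneg
        refine setIntegral_mono_on hsq (hq.mono_set fun b hb => ?_) measurableSet_ball
          fun b hb => sq_sub_le_div_dist_rpow hs u ((hsub b hb).le.trans h1)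
        exact (hsub b hb).trans_le hR
    _ ≤ _ := by
        refine div_le_div_of_nonneg_right ?_ measureReal_nonneg
        refine setIntegral_mono_set hq (Eventually.of_forall fun b => by positivity)
          (Eventually.of_forall fun b hb => ?_)
        exact (hsub b hb).trans_le hR

end LocalEnergy

section BallAverage

variable {G : Type*} [NormedAddCommGroup G] [MeasurableSpace G] {μ : Measure G}

theorem measure_ball_eq_measure_ball_zero [μ.IsAddLeftInvariant] (x : G) (ρ : ℝ) :
    μ (ball x ρ) = μ (ball 0 ρ) := by
  rw [← vadd_ball_zero, measure_vadd]

variable [BorelSpace G] [SecondCountableTopology G] [IsFiniteMeasure μ] [μ.IsAddLeftInvariant]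
  [μ.IsOpenPosMeasure] {s R ρ : ℝ} {u : G → ℝ}

theorem ae_forall_sq_sub_setAverage_ball_le (hs : 0 ≤ s) (hρ : 0 < ρ) (hu : MemLp u 2 μ)
    (hq : Integrable (fun p : G × G => (u p.1 - u p.2) ^ 2 / dist p.1 p.2 ^ s) (μ.prod μ)) :
    ∀ᵐ a ∂μ, ∀ y, dist a y + ρ ≤ R → dist a y + ρ ≤ 1 →
      (u a - ⨍ b in ball y ρ, u b ∂μ) ^ 2 ≤
        (∫ b in {b | dist a b < R}, (u a - u b) ^ 2 / dist a b ^ s ∂μ) / μ.real (ball 0 ρ) := by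
  filter_upwards [hq.prod_right_ae] with a ha y hR h1
  rw [measureReal_def, ← measure_ball_eq_measure_ball_zero y]
  exact sq_sub_setAverage_ball_le hs hu ha.integrableOn (measure_ball_pos μ y hρ).ne' hR h1

theorem sq_setAverage_ball_sub_setAverage_ball_le (hs : 0 ≤ s) (hρ : 0 < ρ) (hρR : 3 * ρ ≤ R)
    (hρ1 : 3 * ρ ≤ 1) (hu : MemLp u 2 μ)
    (hq : Integrable (fun p : G × G => (u p.1 - u p.2) ^ 2 / dist p.1 p.2 ^ s) (μ.prod μ))
    {x y : G} (hxy : dist x y ≤ ρ) :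
    (⨍ a in ball x ρ, u a ∂μ - ⨍ b in ball y ρ, u b ∂μ) ^ 2 ≤
      localEnergy μ s R u / μ.real (ball 0 ρ) ^ 2 := by
  set V := μ.real (ball 0 ρ)
  set W := fun a => ∫ b in {b | dist a b < R}, (u a - u b) ^ 2 / dist a b ^ s ∂μ
  have hV : μ.real (ball x ρ) = V := by
    rw [measureReal_def, measure_ball_eq_measure_ball_zero x]; rfl
  have hW : Integrable W μ := integrable_setIntegral_dist_lt hq R
  have hWnonneg : 0 ≤ W := fun a => integral_nonneg fun b => by positivity
  have hpt : ∀ᵐ a ∂μ.restrict (ball x ρ), (u a - ⨍ b in ball y ρ, u b ∂μ) ^ 2 ≤ W a / V := by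
    filter_upwards [ae_restrict_of_ae (ae_forall_sq_sub_setAverage_ball_le (R := R) hs hρ hu hq),
      ae_restrict_mem measurableSet_ball] with a ha hax
    have : dist a y < 2 * ρ := (dist_triangle a x y).trans_lt (by linarith [mem_ball.1 hax])
    exact ha y (by linarith) (by linarith)
  calc (⨍ a in ball x ρ, u a ∂μ - ⨍ b in ball y ρ, u b ∂μ) ^ 2
      ≤ ⨍ a in ball x ρ, (u a - ⨍ b in ball y ρ, u b ∂μ) ^ 2 ∂μ :=
        sq_setAverage_sub_le (measure_ball_pos μ x hρ).ne' (measure_ne_top μ _) (hu.restrict _) _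
    _ = (∫ a in ball x ρ, (u a - ⨍ b in ball y ρ, u b ∂μ) ^ 2 ∂μ) / V := by
        rw [setAverage_eq, smul_eq_mul, inv_mul_eq_div, hV]
    _ ≤ (∫ a in ball x ρ, W a / V ∂μ) / V := by
        refine div_le_div_of_nonneg_right (integral_mono_ae ?_ (hW.div_const V).integrableOn hpt)
          measureReal_nonneg
        exact (hu.sub (memLp_const _)).integrable_sq.integrableOn
    _ ≤ (∫ a, W a / V ∂μ) / V := by
        refine div_le_div_of_nonneg_right (setIntegral_le_integral (hW.div_const V)
          (Eventually.of_forall fun a => by have := hWnonneg a; positivity)) measureReal_nonneg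
    _ = localEnergy μ s R u / V ^ 2 := by
        rw [integral_div, localEnergy, div_div, sq]

theorem sq_setAverage_ball_add_nsmul_sub_le (hs : 0 ≤ s) (hρ : 0 < ρ) (hρR : 3 * ρ ≤ R)
    (hρ1 : 3 * ρ ≤ 1) (hu : MemLp u 2 μ)
    (hq : Integrable (fun p : G × G => (u p.1 - u p.2) ^ 2 / dist p.1 p.2 ^ s) (μ.prod μ))
    {w : G} (hw : ‖w‖ ≤ ρ) (x : G) (N : ℕ) :
    (⨍ a in ball (x + N • w) ρ, u a ∂μ - ⨍ a in ball x ρ, u a ∂μ) ^ 2 ≤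
      N ^ 2 * (localEnergy μ s R u / μ.real (ball 0 ρ) ^ 2) := by
  set v : G → ℝ := fun z => ⨍ a in ball z ρ, u a ∂μ
  set δ := Real.sqrt (localEnergy μ s R u / μ.real (ball 0 ρ) ^ 2)
  have hstep : ∀ a, |v (a + w) - v a| ≤ δ := fun a =>
    Real.abs_le_sqrt <| sq_setAverage_ball_sub_setAverage_ball_le hs hρ hρR hρ1 hu hq
      (by rwa [dist_eq_norm, add_sub_cancel_left])
  have hchain : ∀ N : ℕ, |v (x + N • w) - v x| ≤ N * δ := by
    intro N
    induction N with
    | zero => simp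
    | succ N ih =>
      rw [succ_nsmul, ← add_assoc, Nat.cast_succ, add_one_mul]
      exact (abs_sub_le _ (v (x + N • w)) _).trans (by linarith [hstep (x + N • w)])
  calc (v (x + N • w) - v x) ^ 2 = |v (x + N • w) - v x| ^ 2 := (sq_abs _).symm
    _ ≤ (N * δ) ^ 2 := pow_le_pow_left₀ (abs_nonneg _) (hchain N) 2
    _ = _ := by rw [mul_pow, Real.sq_sqrt (by have := localEnergy_nonneg μ s R u; positivity)]

end BallAverage

section Torus

instance : IsProbabilityMeasure (volume : Measure (AddCircle (1 : ℝ))) :=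
  ⟨by simp [AddCircle.measure_univ]⟩

theorem exists_nsmul_eq_norm_le {n N : ℕ} (hN : N ≠ 0) (g : Fin n → AddCircle (1 : ℝ)) :
    ∃ w : Fin n → AddCircle (1 : ℝ), N • w = g ∧ ‖w‖ ≤ 1 / N := by
  choose t ht hg using fun i => AddCircle.eq_coe_Ico (g i)
  refine ⟨fun i => ((t i / N : ℝ) : AddCircle (1 : ℝ)), funext fun i => ?_, ?_⟩
  · rw [Pi.smul_apply, ← AddCircle.coe_nsmul, nsmul_eq_mul, mul_div_cancel₀ _ (by simpa), hg]
  · refine (pi_norm_le_iff_of_nonneg (by positivity)).2 fun i => ?_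
    refine QuotientAddGroup.norm_mk_le_norm.trans ?_
    rw [Real.norm_eq_abs, abs_div, Nat.abs_cast, abs_of_nonneg (ht i).1]
    exact div_le_div_of_nonneg_right (ht i).2.le (Nat.cast_nonneg N)

theorem exists_variance_le_mul_localEnergy (n : ℕ) {s R : ℝ} (hs : 0 ≤ s) (hR : 0 < R) :
    ∃ M : ℝ, ∀ u : (Fin n → AddCircle (1 : ℝ)) → ℝ, MemLp u 2 →
      Integrable (fun p : (Fin n → AddCircle (1 : ℝ)) × (Fin n → AddCircle (1 : ℝ)) =>
        (u p.1 - u p.2) ^ 2 / dist p.1 p.2 ^ s) (volume.prod volume) →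
      Var[u; volume] ≤ M * localEnergy volume s R u := by
  obtain ⟨ρ, hρ, hρR, hρ1⟩ : ∃ ρ : ℝ, 0 < ρ ∧ 3 * ρ ≤ R ∧ 3 * ρ ≤ 1 :=
    ⟨min R 1 / 3, by positivity, by linarith [min_le_left R 1], by linarith [min_le_right R 1]⟩
  obtain ⟨N, hN⟩ := exists_nat_gt (1 / ρ)
  have hN0 : (0 : ℝ) < N := (one_div_pos.2 hρ).trans hN
  have hNρ : 1 / (N : ℝ) ≤ ρ := (one_div_le hN0 hρ).2 hN.le
  set V := (volume : Measure (Fin n → AddCircle (1 : ℝ))).real (ball 0 ρ)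
  have hV : 0 < V := ENNReal.toReal_pos (measure_ball_pos _ _ hρ).ne' (measure_ne_top _ _)
  refine ⟨2 / V + 2 * N ^ 2 / V ^ 2, fun u hu hq => ?_⟩
  set ε := localEnergy volume s R u
  set W := fun x => ∫ y in {y | dist x y < R}, (u x - u y) ^ 2 / dist x y ^ s
  set c := ⨍ a in ball 0 ρ, u a
  have hae : ∀ᵐ x, (u x - c) ^ 2 ≤ 2 * (W x / V) + 2 * (N ^ 2 * (ε / V ^ 2)) := by
    filter_upwards [ae_forall_sq_sub_setAverage_ball_le (R := R) hs hρ hu hq] with x hx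
    obtain ⟨w, rfl, hw⟩ := exists_nsmul_eq_norm_le (Nat.cast_pos.1 hN0).ne' x
    set v := ⨍ a in ball (N • w) ρ, u a
    have hnear : (u (N • w) - v) ^ 2 ≤ W (N • w) / V :=
      hx (N • w) (by rw [dist_self, zero_add]; linarith) (by rw [dist_self, zero_add]; linarith)
    have hfar : (v - c) ^ 2 ≤ N ^ 2 * (ε / V ^ 2) := by
      simpa using sq_setAverage_ball_add_nsmul_sub_le hs hρ hρR hρ1 hu hq (hw.trans hNρ) 0 N
    calc (u (N • w) - c) ^ 2 = ((u (N • w) - v) + (v - c)) ^ 2 := by ring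
      _ ≤ 2 * ((u (N • w) - v) ^ 2 + (v - c) ^ 2) := add_sq_le
      _ ≤ 2 * (W (N • w) / V) + 2 * (N ^ 2 * (ε / V ^ 2)) := by linarith
  calc Var[u; volume] ≤ ∫ x, (u x - c) ^ 2 := variance_le_integral_sub_const_sq hu c
    _ ≤ ∫ x, (2 * (W x / V) + 2 * (N ^ 2 * (ε / V ^ 2))) :=
        integral_mono_ae (hu.sub (memLp_const c)).integrable_sq
          ((((integrable_setIntegral_dist_lt hq R).div_const V).const_mul 2).add
            (integrable_const _)) hae
    _ = (2 / V + 2 * N ^ 2 / V ^ 2) * ε := by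
        rw [integral_add (((integrable_setIntegral_dist_lt hq R).div_const V).const_mul 2)
          (integrable_const _), integral_const_mul, integral_div, integral_const,
          probReal_univ, one_smul]
        change 2 * (ε / V) + _ = _
        ring

end Torus

theorem stmt_7_general (n : ℕ) (α R₀ : ℝ) (hα : 0 < α) (hR : 0 < R₀)
    (u : ℕ → (Fin n → AddCircle (1:ℝ)) → ℝ)
    (hmeas : ∀ k, Measurable (u k))
    (hL2 : ∀ k, ∫ x, (u k x)^2 = 1)
    (hH : ∀ k, Integrable (fun p : (Fin n → AddCircle (1:ℝ)) × (Fin n → AddCircle (1:ℝ)) =>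
      (u k p.1 - u k p.2)^2 / dist p.1 p.2 ^ ((n:ℝ)+α)))
    (hvanish : Tendsto
      (fun k => ∫ x, ∫ y in {y | dist x y < R₀}, (u k x - u k y)^2 / dist x y ^ ((n:ℝ)+α))
      atTop (nhds 0)) :
    ∃ σ : ℕ → ℕ, StrictMono σ ∧ ∃ cst : ℝ, |cst| = 1 ∧
      Tendsto (fun k => ∫ x, (u (σ k) x - cst)^2) atTop (nhds 0) := by
  have hu : ∀ k, MemLp (u k) 2 := fun k =>
    (memLp_two_iff_integrable_sq (hmeas k).aestronglyMeasurable).2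
      (Integrable.of_integral_ne_zero (by simp [hL2 k]))
  obtain ⟨M, hM⟩ := exists_variance_le_mul_localEnergy n (by positivity : (0 : ℝ) ≤ n + α) hR
  refine exists_subseq_tendsto_integral_sub_const_sq hu hL2 ?_
  refine squeeze_zero (fun k => variance_nonneg _ _) (fun k => hM (u k) (hu k) (hH k)) ?_
  simpa [localEnergy] using hvanish.const_mul M

theorem stmt_7 (n : ℕ) (hn : 0 < n) (α R₀ : ℝ) (hα : 0 < α) (hα2 : α < 2) (hR : 0 < R₀)
    (u : ℕ → (Fin n → AddCircle (1:ℝ)) → ℝ)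
    (hmeas : ∀ k, Measurable (u k))
    (hL2 : ∀ k, ∫ x, (u k x)^2 = 1)
    (hH : ∀ k, Integrable (fun p : (Fin n → AddCircle (1:ℝ)) × (Fin n → AddCircle (1:ℝ)) =>
      (u k p.1 - u k p.2)^2 / dist p.1 p.2 ^ ((n:ℝ)+α)))
    (hvanish : Tendsto
      (fun k => ∫ x, ∫ y in {y | dist x y < R₀}, (u k x - u k y)^2 / dist x y ^ ((n:ℝ)+α))
      atTop (nhds 0)) :
    ∃ σ : ℕ → ℕ, StrictMono σ ∧ ∃ cst : ℝ, |cst| = 1 ∧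
      Tendsto (fun k => ∫ x, (u (σ k) x - cst)^2) atTop (nhds 0) :=
  stmt_7_general n α R₀ hα hR u hmeas hL2 hH hvanish
end

section
/- For n ≥ 2, define for x, y ∈ ℝⁿ with x ≠ y the region Ω(x,y) = { z : |z − z₋| < r(1 − t₋²) } where r = |x−y|/2, z₋ is the orthogonal projection of z onto the segment parametrized as z₋(t) = (x+y)/2 + (t/2)(y−x) for t ∈ [−1,1], and t₋ is the corresponding parameter. Then for any x*, r > 0: if |x − x*| < r/10 and |x′ − x*| < r, then Ω(x, x′) ⊆ B(x*, r). -/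
open RealInnerProductSpace Metric

/-! Write `z = m + t u + w` with `m` the midpoint of `[x, y]`, `u` the unit direction of `y - x` and
`w ⟂ u`, and likewise `m - x* = c u + d` with `d ⟂ u`. By Pythagoras, `|x - x*|² = (c - ρ)² + |d|²`,
`|y - x*|² = (c + ρ)² + |d|²` and `|z - x*|² ≤ (c + t)² + (|d| + |w|)²`, where `ρ = |y - x| / 2`, so the
claim reduces to an inequality in the plane spanned by `u` and `d`. There, if the segment is short
(`ρ ≤ 3r/10`) the whole spindle is crudely within `r` of `x*`; if it is long, then `x*` lies far behind `x`
along `u`, and every point of the spindle is closer to `x*` than `y` is. -/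

lemma spindle_profile_sq_le {c p e s r : ℝ} (hr : 0 ≤ r) (hp : 0 ≤ p) (he : 0 ≤ e)
    (hs : s ∈ Set.Icc (-1) 1) (hx : (c - p) ^ 2 + e ^ 2 ≤ (r / 10) ^ 2)
    (hy : (c + p) ^ 2 + e ^ 2 ≤ r ^ 2) :
    (c + p * s) ^ 2 + (e + p * (1 - s ^ 2)) ^ 2 ≤ r ^ 2 := by
  obtain ⟨hs₁, hs₂⟩ := hs
  have hcp : |c - p| ≤ r / 10 := abs_le_of_sq_le_sq (by nlinarith) (by positivity)
  have he' : e ≤ r / 10 := abs_le_of_sq_le_sq' (by nlinarith) (by positivity) |>.2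
  obtain ⟨hcp₁, hcp₂⟩ := abs_le.mp hcp
  rcases le_or_gt p (3 * r / 10) with hshort | hlong
  · have h₁ : |c + p * s| ≤ 7 * r / 10 := abs_le.mpr ⟨by nlinarith, by nlinarith⟩
    have h₂ : 0 ≤ e + p * (1 - s ^ 2) := by
      nlinarith [mul_nonneg hp (mul_nonneg (by linarith : 0 ≤ 1 - s) (by linarith : 0 ≤ 1 + s))]
    have h₃ : e + p * (1 - s ^ 2) ≤ 4 * r / 10 := by nlinarith
    nlinarith [sq_le_sq' (abs_le.mp h₁).1 (abs_le.mp h₁).2, mul_self_le_mul_self h₂ h₃]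
  · have hbulge : -2 * c + (1 + s) * (2 * e - p * s ^ 2) ≤ 0 := by
      nlinarith [mul_nonneg (mul_nonneg hp (sq_nonneg s)) (by linarith : 0 ≤ 1 + s)]
    -- the excess over `y`'s squared distance factors through the nonpositive bulge term
    have hid : (c + p * s) ^ 2 + (e + p * (1 - s ^ 2)) ^ 2
        = (c + p) ^ 2 + e ^ 2 + p * (1 - s) * (-2 * c + (1 + s) * (2 * e - p * s ^ 2)) := by ring
    nlinarith [mul_nonneg hp (by linarith : 0 ≤ 1 - s)]

section

variable {E : Type*} [NormedAddCommGroup E] [InnerProductSpace ℝ E]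

lemma norm_smul_add_sq {u b : E} (hu : ‖u‖ = 1) (hb : ⟪b, u⟫ = 0) (a : ℝ) :
    ‖a • u + b‖ ^ 2 = a ^ 2 + ‖b‖ ^ 2 := by
  rw [norm_add_sq_real, real_inner_smul_left, real_inner_comm, hb, norm_smul, hu]
  simp

lemma norm_add_smul_add_lt {q u w : E} {ρ s r : ℝ} (hu : ‖u‖ = 1) (hw : ⟪w, u⟫ = 0)
    (hρ : 0 ≤ ρ) (hs : s ∈ Set.Icc (-1) 1) (hwρ : ‖w‖ < ρ * (1 - s ^ 2))
    (hx : ‖q - ρ • u‖ ≤ r / 10) (hy : ‖q + ρ • u‖ ≤ r) :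
    ‖q + (ρ * s) • u + w‖ < r := by
  have hr : 0 ≤ r := (norm_nonneg _).trans hy
  set d := q - ⟪q, u⟫ • u
  have hd : ⟪d, u⟫ = 0 := by
    simp [d, inner_sub_left, real_inner_smul_left, hu]
  have hpyth (a : ℝ) : ‖q + a • u‖ ^ 2 = (⟪q, u⟫ + a) ^ 2 + ‖d‖ ^ 2 := by
    rw [← norm_smul_add_sq hu hd]; congr 2; module
  have hx' : (⟪q, u⟫ - ρ) ^ 2 + ‖d‖ ^ 2 ≤ (r / 10) ^ 2 := by
    have h := hpyth (-ρ)
    rw [neg_smul, ← sub_eq_add_neg, ← sub_eq_add_neg] at h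
    rw [← h]; gcongr
  have hy' : (⟪q, u⟫ + ρ) ^ 2 + ‖d‖ ^ 2 ≤ r ^ 2 := by rw [← hpyth]; gcongr
  have hz : ‖q + (ρ * s) • u + w‖ ^ 2 ≤ (⟪q, u⟫ + ρ * s) ^ 2 + (‖d‖ + ‖w‖) ^ 2 := by
    have hdw : ⟪d + w, u⟫ = 0 := by rw [inner_add_left, hd, hw, add_zero]
    have hsplit : q + (ρ * s) • u + w = (⟪q, u⟫ + ρ * s) • u + (d + w) := by module
    rw [hsplit, norm_smul_add_sq hu hdw]
    gcongr
    exact norm_add_le d w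
  have hkey := spindle_profile_sq_le hr hρ (norm_nonneg d) hs hx' hy'
  refine (pow_lt_pow_iff_left₀ (norm_nonneg _) hr two_ne_zero).1 ?_
  nlinarith [norm_nonneg d, norm_nonneg w]

def spindle (x y : E) : Set E :=
  {z | dist z (midpoint ℝ x y + ⟪z - midpoint ℝ x y, ‖y - x‖⁻¹ • (y - x)⟫ • (‖y - x‖⁻¹ • (y - x)))
    < (‖y - x‖ / 2) * (1 - (⟪z - midpoint ℝ x y, ‖y - x‖⁻¹ • (y - x)⟫ / (‖y - x‖ / 2)) ^ 2)}

theorem spindle_subset_ball {x y c : E} {r : ℝ} (hx : dist x c ≤ r / 10) (hy : dist y c ≤ r) :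
    spindle x y ⊆ ball c r := by
  intro z hz
  have hm : midpoint ℝ x y = (2⁻¹ : ℝ) • (x + y) := by rw [midpoint_eq_smul_add, invOf_eq_inv]
  set m := midpoint ℝ x y
  set u := ‖y - x‖⁻¹ • (y - x)
  set ρ := ‖y - x‖ / 2
  set t := ⟪z - m, u⟫
  have hpos : 0 < ρ * (1 - (t / ρ) ^ 2) := dist_nonneg.trans_lt hz
  have hρ : 0 < ρ := by
    rcases pos_and_pos_or_neg_and_neg_of_mul_pos hpos with h | h
    · exact h.1
    · exact absurd h.1 (not_lt.2 (by positivity))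
  have hs : t / ρ ∈ Set.Icc (-1) 1 :=
    abs_le.1 ((sq_lt_one_iff_abs_lt_one _).1 (sub_pos.1 (pos_of_mul_pos_right hpos hρ.le))).le
  have hyx : ‖y - x‖ ≠ 0 := fun h => hρ.ne' (by simp [ρ, h])
  have hu : ‖u‖ = 1 := by simpa using norm_smul_inv_norm (𝕜 := ℝ) (norm_ne_zero_iff.1 hyx)
  have hρu : ρ • u = (2⁻¹ : ℝ) • (y - x) := by
    rw [smul_smul]; congr 1; simp only [ρ]; field_simp
  have hw : ⟪z - (m + t • u), u⟫ = 0 := by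
    rw [sub_add_eq_sub_sub, inner_sub_left, real_inner_smul_left, real_inner_self_eq_norm_sq, hu]
    ring
  have hxq : m - c - ρ • u = x - c := by rw [hρu, hm]; module
  have hyq : m - c + ρ • u = y - c := by rw [hρu, hm]; module
  have hzq : z - c = m - c + (ρ * (t / ρ)) • u + (z - (m + t • u)) := by
    rw [mul_div_cancel₀ t hρ.ne']; abel
  rw [mem_ball, dist_eq_norm, hzq]
  exact norm_add_smul_add_lt hu hw hρ.le hs (by rwa [← dist_eq_norm])
    (by rwa [hxq, ← dist_eq_norm]) (by rwa [hyq, ← dist_eq_norm])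

end

theorem stmt_9_general (n : ℕ) :
    ∀ x y : EuclideanSpace ℝ (Fin n), x ≠ y →
    ∀ (xstar : EuclideanSpace ℝ (Fin n)) (r : ℝ), 0 < r →
      dist x xstar < r/10 → dist y xstar < r →
      {z : EuclideanSpace ℝ (Fin n) |
        dist z (midpoint ℝ x y + ⟪z - midpoint ℝ x y, ‖y - x‖⁻¹ • (y - x)⟫ • (‖y - x‖⁻¹ • (y - x)))
          < (‖y - x‖ / 2) *
              (1 - (⟪z - midpoint ℝ x y, ‖y - x‖⁻¹ • (y - x)⟫ / (‖y - x‖ / 2))^2)}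
        ⊆ ball xstar r :=
  fun _ _ _ _ _ _ hx hy => spindle_subset_ball hx.le hy.le

theorem stmt_9 (n : ℕ) (hn : 2 ≤ n) :
    ∀ x y : EuclideanSpace ℝ (Fin n), x ≠ y →
    ∀ (xstar : EuclideanSpace ℝ (Fin n)) (r : ℝ), 0 < r →
      dist x xstar < r/10 → dist y xstar < r →
      {z : EuclideanSpace ℝ (Fin n) |
        dist z (midpoint ℝ x y + ⟪z - midpoint ℝ x y, ‖y - x‖⁻¹ • (y - x)⟫ • (‖y - x‖⁻¹ • (y - x)))
          < (‖y - x‖ / 2) *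
              (1 - (⟪z - midpoint ℝ x y, ‖y - x‖⁻¹ • (y - x)⟫ / (‖y - x‖ / 2))^2)}
        ⊆ ball xstar r :=
  stmt_9_general n
end

section
/- Let u : [0,∞) × 𝕋ⁿ → ℝ be a C¹ solution of u_t + b·∇u = ∫ K(t,x,y)(u(t,y) − u(t,x)) dy, where b is a continuous vector field and K ≥ 0 is a nonnegative integrable kernel. Then u satisfies the maximum principle: for all t ≥ 0 and x, min u(0,·) ≤ u(t,x) ≤ max u(0,·). Moreover, t ↦ max_x u(t,x) is nonincreasing and t ↦ min_x u(t,x) is nondecreasing. -/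
/-!
At a spatial maximum `x₀` of `u(t, ·)` the transport term vanishes because `∇u(t, x₀) = 0`, and
the integral term is `≤ 0` because `K ≥ 0` and `u(t, y) ≤ u(t, x₀)`; hence `∂ₜu(t, x₀) ≤ 0`.
Instead of differentiating `t ↦ max u(t, ·)`, maximize `u(r, x) - ε (r - s)` over
`[s, t] × [0, 1]ⁿ` (periodicity reduces space to the unit cube): at a maximizer with `r > s` the
time derivative would be `≤ -ε < 0`, contradicting maximality from the left, so the maximum sits
at time `s`. Letting `ε → 0` bounds `u(t, ·)` by `sup u(s, ·)`; the minimum is handled through `-u`.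
-/

open MeasureTheory Set

theorem HasDerivAt.nonneg_of_isMaxOn_Icc {g : ℝ → ℝ} {a r d : ℝ} (har : a < r)
    (hd : HasDerivAt g d r) (hmax : IsMaxOn g (Icc a r) r) : 0 ≤ d := by
  have hcone : a - r ∈ posTangentConeAt (Icc a r) r :=
    sub_mem_posTangentConeAt_of_segment_subset
      ((segment_subset_uIcc r a).trans (uIcc_of_ge har.le).le)
  have := hmax.localize.hasFDerivWithinAt_nonpos hd.hasDerivWithinAt.hasFDerivWithinAt hcone
  rw [ContinuousLinearMap.toSpanSingleton_apply, smul_eq_mul] at this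
  nlinarith

theorem exists_mem_Icc_zero_one_eq_of_periodic {ι α : Type*} {f : (ι → ℝ) → α}
    (hf : ∀ x (m : ι → ℤ), f (x + fun i => (m i : ℝ)) = f x) (x : ι → ℝ) :
    ∃ y ∈ Icc (0 : ι → ℝ) 1, f y = f x := by
  refine ⟨fun i => Int.fract (x i), ⟨fun i => Int.fract_nonneg _,
    fun i => (Int.fract_lt_one _).le⟩, ?_⟩
  have hx : (fun i => Int.fract (x i)) + (fun i => (⌊x i⌋ : ℝ)) = x :=
    funext fun i => Int.fract_add_floor (x i)
  rw [← hf _ fun i => ⌊x i⌋, hx]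

section SpatialExtremum

variable {E : Type*} [NormedAddCommGroup E] [NormedSpace ℝ E] [MeasureSpace E]
  {f : E → ℝ} {f' : E →L[ℝ] ℝ} {k : E → ℝ} {x w : E} {a : ℝ}

theorem nonpos_of_add_fderiv_eq_integral_of_forall_le (hf : HasFDerivAt f f' x) (hk : 0 ≤ k)
    (hmax : ∀ z, f z ≤ f x) (h : a + f' w = ∫ y, k y * (f y - f x)) : a ≤ 0 := by
  have hf' : f' = 0 := IsLocalMax.hasFDerivAt_eq_zero (Filter.Eventually.of_forall hmax) hf
  have hint : ∫ y, k y * (f y - f x) ≤ 0 :=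
    integral_nonpos fun y => mul_nonpos_of_nonneg_of_nonpos (hk y) (sub_nonpos.2 (hmax y))
  linarith [show f' w = 0 by simp [hf']]

theorem nonneg_of_add_fderiv_eq_integral_of_forall_ge (hf : HasFDerivAt f f' x) (hk : 0 ≤ k)
    (hmin : ∀ z, f x ≤ f z) (h : a + f' w = ∫ y, k y * (f y - f x)) : 0 ≤ a := by
  have hf' : f' = 0 := IsLocalMin.hasFDerivAt_eq_zero (Filter.Eventually.of_forall hmin) hf
  have hint : 0 ≤ ∫ y, k y * (f y - f x) :=
    integral_nonneg fun y => mul_nonneg (hk y) (sub_nonneg.2 (hmin y))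
  linarith [show f' w = 0 by simp [hf']]

end SpatialExtremum

section MaxPrinciple

variable {X : Type*} [TopologicalSpace X] {v vt : ℝ → X → ℝ} {C : Set X}

theorem le_sSup_range_add_mul_of_deriv_nonpos_at_max (hC : IsCompact C)
    (hrep : ∀ r x, ∃ y ∈ C, v r y = v r x) (hv : Continuous (Function.uncurry v))
    (hvt : ∀ r x, HasDerivAt (fun s => v s x) (vt r x) r)
    (hmax : ∀ r x, (∀ z, v r z ≤ v r x) → vt r x ≤ 0) {s t ε : ℝ} (hst : s ≤ t) (hε : 0 < ε)
    (x : X) : v t x ≤ sSup (range (v s)) + ε * (t - s) := by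
  set w : ℝ × X → ℝ := fun p => v p.1 p.2 - ε * (p.1 - s) with hw_def
  have hw_cont : Continuous w :=
    hv.sub (continuous_const.mul (continuous_fst.sub continuous_const))
  obtain ⟨y, hyC, hy⟩ := hrep t x
  obtain ⟨⟨r₀, x₀⟩, ⟨hr₀, hx₀⟩, hw⟩ := (isCompact_Icc.prod hC).exists_isMaxOn
    ⟨(t, y), right_mem_Icc.2 hst, hyC⟩ hw_cont.continuousOn
  have hspace : ∀ z, v r₀ z ≤ v r₀ x₀ := fun z => by
    obtain ⟨z', hz'C, hz'⟩ := hrep r₀ z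
    have : w (r₀, z') ≤ w (r₀, x₀) := hw ⟨hr₀, hz'C⟩
    simp only [hw_def, sub_le_sub_iff_right] at this
    exact hz' ▸ this
  have hr₀s : r₀ = s := by
    by_contra hne
    have hsr : s < r₀ := lt_of_le_of_ne hr₀.1 (Ne.symm hne)
    have hderiv : HasDerivAt (fun r => w (r, x₀)) (vt r₀ x₀ - ε) r₀ :=
      (hvt r₀ x₀).sub ((((hasDerivAt_id r₀).sub_const s).const_mul ε).congr_deriv (mul_one ε))
    have := hderiv.nonneg_of_isMaxOn_Icc hsr fun r hr => hw ⟨⟨hr.1, hr.2.trans hr₀.2⟩, hx₀⟩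
    linarith [hmax r₀ x₀ hspace]
  have hbdd : BddAbove (range (v s)) :=
    (hC.image (hv.uncurry_left s)).bddAbove.mono (range_subset_iff.2 (hrep s))
  calc v t x = w (t, y) + ε * (t - s) := by simp [hw_def, hy]
    _ ≤ w (r₀, x₀) + ε * (t - s) := by gcongr; exact hw ⟨right_mem_Icc.2 hst, hyC⟩
    _ = v s x₀ + ε * (t - s) := by simp [hw_def, hr₀s]
    _ ≤ sSup (range (v s)) + ε * (t - s) := by gcongr; exact le_csSup hbdd (mem_range_self _)

theorem le_sSup_range_of_deriv_nonpos_at_max (hC : IsCompact C)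
    (hrep : ∀ r x, ∃ y ∈ C, v r y = v r x) (hv : Continuous (Function.uncurry v))
    (hvt : ∀ r x, HasDerivAt (fun s => v s x) (vt r x) r)
    (hmax : ∀ r x, (∀ z, v r z ≤ v r x) → vt r x ≤ 0) {s t : ℝ} (hst : s ≤ t) (x : X) :
    v t x ≤ sSup (range (v s)) := by
  refine le_of_forall_pos_le_add fun δ hδ => ?_
  have hts : 0 < t - s + 1 := by linarith
  calc v t x ≤ sSup (range (v s)) + δ / (t - s + 1) * (t - s) :=
        le_sSup_range_add_mul_of_deriv_nonpos_at_max hC hrep hv hvt hmax hst (by positivity) x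
    _ ≤ sSup (range (v s)) + δ / (t - s + 1) * (t - s + 1) := by gcongr; linarith
    _ = sSup (range (v s)) + δ := by rw [div_mul_cancel₀ _ hts.ne']

end MaxPrinciple

theorem stmt_10_general (n : ℕ)
    (u ut : ℝ → (Fin n → ℝ) → ℝ)
    (du : ℝ → (Fin n → ℝ) → ((Fin n → ℝ) →L[ℝ] ℝ))
    (b : ℝ → (Fin n → ℝ) → (Fin n → ℝ))
    (K : ℝ → (Fin n → ℝ) → (Fin n → ℝ) → ℝ)
    (hper : ∀ t x (m : Fin n → ℤ), u t (x + fun i => (m i : ℝ)) = u t x)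
    (hucont : Continuous (Function.uncurry u))
    (hut : ∀ t x, HasDerivAt (fun s => u s x) (ut t x) t)
    (hdu : ∀ t x, HasFDerivAt (u t) (du t x) x)
    (hK : ∀ t x y, 0 ≤ K t x y)
    (heq : ∀ t x, ut t x + du t x (b t x) = ∫ y, K t x y * (u t y - u t x)) :
    (∀ t, 0 ≤ t → ∀ x, sInf (Set.range (u 0)) ≤ u t x ∧ u t x ≤ sSup (Set.range (u 0))) ∧
    AntitoneOn (fun t => sSup (Set.range (u t))) (Set.Ici 0) ∧
    MonotoneOn (fun t => sInf (Set.range (u t))) (Set.Ici 0) := by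
  have hupper : ∀ s t, s ≤ t → ∀ x, u t x ≤ sSup (range (u s)) := fun s t hst =>
    le_sSup_range_of_deriv_nonpos_at_max isCompact_Icc
      (fun r => exists_mem_Icc_zero_one_eq_of_periodic (hper r)) hucont hut
      (fun r x hx => nonpos_of_add_fderiv_eq_integral_of_forall_le (hdu r x) (hK r x) hx (heq r x))
      hst
  have hlower : ∀ s t, s ≤ t → ∀ x, sInf (range (u s)) ≤ u t x := fun s t hst x => by
    have := le_sSup_range_of_deriv_nonpos_at_max (v := fun r z => -u r z) isCompact_Icc
      (fun r => exists_mem_Icc_zero_one_eq_of_periodic fun z m => congrArg Neg.neg (hper r z m))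
      hucont.neg (fun r x => (hut r x).neg)
      (fun r x hx => neg_nonpos.2 <| nonneg_of_add_fderiv_eq_integral_of_forall_ge (hdu r x)
        (hK r x) (fun z => neg_le_neg_iff.1 (hx z)) (heq r x))
      hst x
    rwa [← neg_range, ← neg_neg (sSup _), ← Real.sInf_def, neg_le_neg_iff] at this
  exact ⟨fun t ht x => ⟨hlower 0 t ht x, hupper 0 t ht x⟩,
    fun s _ t _ hst => ciSup_le (hupper s t hst), fun s _ t _ hst => le_ciInf (hlower s t hst)⟩

theorem stmt_10 (n : ℕ) (hn : 0 < n)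
    (u ut : ℝ → (Fin n → ℝ) → ℝ)
    (du : ℝ → (Fin n → ℝ) → ((Fin n → ℝ) →L[ℝ] ℝ))
    (b : ℝ → (Fin n → ℝ) → (Fin n → ℝ))
    (K : ℝ → (Fin n → ℝ) → (Fin n → ℝ) → ℝ)
    (hper : ∀ t x (m : Fin n → ℤ), u t (x + fun i => (m i : ℝ)) = u t x)
    (hucont : Continuous (Function.uncurry u))
    (hut : ∀ t x, HasDerivAt (fun s => u s x) (ut t x) t)
    (hdu : ∀ t x, HasFDerivAt (u t) (du t x) x)
    (hb : Continuous (Function.uncurry (fun t x => b t x)))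
    (hK : ∀ t x y, 0 ≤ K t x y)
    (hKint : ∀ t x, Integrable (fun y => K t x y * (u t y - u t x)))
    (heq : ∀ t x, ut t x + du t x (b t x) = ∫ y, K t x y * (u t y - u t x)) :
    (∀ t, 0 ≤ t → ∀ x, sInf (Set.range (u 0)) ≤ u t x ∧ u t x ≤ sSup (Set.range (u 0))) ∧
    AntitoneOn (fun t => sSup (Set.range (u t))) (Set.Ici 0) ∧
    MonotoneOn (fun t => sInf (Set.range (u t))) (Set.Ici 0) :=
  stmt_10_general n u ut du b K hper hucont hut hdu hK heq
end

section
/- Let ρ : 𝕋 → ℝ be C¹ with 0 < c ≤ ρ ≤ C, let 0 < α < 2, τ > 0, and let φ(x,y) = h(|x−y|)/(|x−y|^{1+α−τ} · d_ρ(x,y)^τ) with h smooth, 𝟙_{r<R₀} ≤ h(r) ≤ 𝟙_{r<2R₀}, and d_ρ(x,y) = |∫_x^y ρ|. Then for every r > 0 the drift b_r(x) := p.v. ∫_{|z|<r} z · φ(x+z, x) dz exists, is continuous in x, and satisfies |b_r|_∞ ≤ C′ · |ρ′|_∞ · r^{2−α}, where C′ depends only on c, C, τ, α. -/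
open Real Filter Topology MeasureTheory

set_option linter.unusedVariables false
set_option linter.unnecessarySimpa false

lemma aux_inv_rpow_lip {τ m a b : ℝ} (hτ : 0 < τ) (hm : 0 < m) (ha : m ≤ a) (hb : m ≤ b) :
    |a ^ (-τ) - b ^ (-τ)| ≤ τ * m ^ (-τ - 1) * |a - b| := by
  have h : ∀ x ∈ Set.Ici m, HasDerivWithinAt (fun t : ℝ => t ^ (-τ)) ((-τ) * x ^ (-τ - 1)) (Set.Ici m) x := by
    intro x hx
    have hx0 : x ≠ 0 := (hm.trans_le hx).ne'
    simpa using (Real.hasDerivAt_rpow_const (p := -τ) (Or.inl hx0)).hasDerivWithinAt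
  have bound : ∀ x ∈ Set.Ici m, ‖(-τ) * x ^ (-τ - 1)‖ ≤ τ * m ^ (-τ - 1) := by
    intro x hx
    rw [norm_mul, Real.norm_eq_abs, Real.norm_eq_abs, abs_neg, abs_of_pos hτ,
      abs_of_pos (Real.rpow_pos_of_pos (hm.trans_le hx) _)]
    exact mul_le_mul_of_nonneg_left (Real.rpow_le_rpow_of_nonpos hm hx (by linarith)) hτ.le
  have := Convex.norm_image_sub_le_of_norm_hasDerivWithin_le h bound (convex_Ici m) hb ha
  simpa [Real.norm_eq_abs] using this

lemma aux_lip {f : ℝ → ℝ} {M : ℝ} (hf : ContDiff ℝ 1 f) (hM : ∀ y, |deriv f y| ≤ M) (a b : ℝ) :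
    |f a - f b| ≤ M * |a - b| := by
  have h : ∀ x ∈ Set.univ, HasDerivWithinAt f (deriv f x) Set.univ x := fun x _ =>
    ((hf.differentiable one_ne_zero x).hasDerivAt).hasDerivWithinAt
  simpa [Real.norm_eq_abs] using
    Convex.norm_image_sub_le_of_norm_hasDerivWithin_le h (fun x _ => by simpa [Real.norm_eq_abs] using hM x)
      convex_univ (Set.mem_univ b) (Set.mem_univ a)

lemma aux_periodic_deriv (f : ℝ → ℝ) (T : ℝ) (hf : Function.Periodic f T) :
    Function.Periodic (deriv f) T := by
  intro x
  have h1 : (fun y => f (y + T)) = f := funext hf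
  calc deriv f (x + T) = deriv (fun y => f (y + T)) x := (deriv_comp_add_const f T x).symm
    _ = deriv f x := by rw [h1]


lemma aux_d_diff (ρ : ℝ → ℝ) (hρc : Continuous ρ) (M : ℝ)
    (hlip : ∀ a b, |ρ a - ρ b| ≤ M * |a - b|) (x z : ℝ) (hz : 0 ≤ z) :
    |(∫ t in x..(x+z), ρ t) - (∫ t in (x-z)..x, ρ t)| ≤ M * z ^ 2 := by
  have hM0 : 0 ≤ M := by
    have := hlip 0 1; simp at this
    nlinarith [abs_nonneg (ρ 0 - ρ 1)]
  have h1 : (∫ t in (0:ℝ)..z, ρ (x + t)) = ∫ t in x..(x+z), ρ t := by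
    simpa using intervalIntegral.integral_comp_add_left (a := 0) (b := z) (f := ρ) (d := x)
  have h2 : (∫ t in (0:ℝ)..z, ρ (x - t)) = ∫ t in (x-z)..x, ρ t := by
    have := intervalIntegral.integral_comp_neg (a := 0) (b := z) (f := fun t => ρ (x + t))
    simp only [neg_zero] at this
    have h3 : (∫ t in (-z)..(0:ℝ), ρ (x + t)) = ∫ t in (x + -z)..(x+0), ρ t := by
      simpa using intervalIntegral.integral_comp_add_left (a := -z) (b := 0) (f := ρ) (d := x)
    simp only [add_zero] at h3
    calc (∫ t in (0:ℝ)..z, ρ (x - t)) = ∫ t in (0:ℝ)..z, ρ (x + -t) := by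
          simp [sub_eq_add_neg]
      _ = ∫ t in (-z)..(0:ℝ), ρ (x + t) := this
      _ = ∫ t in (x + -z)..x, ρ t := h3
      _ = ∫ t in (x - z)..x, ρ t := by rw [← sub_eq_add_neg]
  rw [← h1, ← h2]
  have hint1 : IntervalIntegrable (fun t => ρ (x + t)) volume 0 z :=
    (hρc.comp (continuous_const.add continuous_id)).intervalIntegrable _ _
  have hint2 : IntervalIntegrable (fun t => ρ (x - t)) volume 0 z :=
    (hρc.comp (continuous_const.sub continuous_id)).intervalIntegrable _ _
  rw [← intervalIntegral.integral_sub hint1 hint2]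
  have hb : ∀ t ∈ Set.uIoc (0:ℝ) z, ‖ρ (x + t) - ρ (x - t)‖ ≤ M * (2 * t) := by
    intro t ht
    rw [Set.uIoc_of_le hz] at ht
    have h0t : 0 < t := ht.1
    have := hlip (x + t) (x - t)
    rw [Real.norm_eq_abs]
    calc |ρ (x + t) - ρ (x - t)| ≤ M * |(x + t) - (x - t)| := this
      _ = M * (2 * t) := by rw [show (x + t) - (x - t) = 2 * t by ring, abs_of_pos (by linarith)]
  have hgint : IntervalIntegrable (fun t : ℝ => M * (2 * t)) volume 0 z :=
    (continuous_const.mul (continuous_const.mul continuous_id)).intervalIntegrable _ _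
  have hae : ∀ᵐ t ∂(volume.restrict (Set.uIoc (0:ℝ) z)), ‖ρ (x + t) - ρ (x - t)‖ ≤ M * (2 * t) := by
    rw [MeasureTheory.ae_restrict_iff' measurableSet_uIoc]
    exact Filter.Eventually.of_forall hb
  have hn := intervalIntegral.norm_integral_le_abs_of_norm_le hae hgint
  have hval : (∫ t in (0:ℝ)..z, M * (2 * t)) = M * z ^ 2 := by
    rw [intervalIntegral.integral_const_mul, intervalIntegral.integral_const_mul, integral_id]
    ring
  rw [← Real.norm_eq_abs]
  calc ‖∫ t in (0:ℝ)..z, (ρ (x + t) - ρ (x - t))‖ ≤ |∫ t in (0:ℝ)..z, M * (2 * t)| := hn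
    _ = |M * z ^ 2| := by rw [hval]
    _ = M * z ^ 2 := abs_of_nonneg (by positivity)


lemma aux_key (c τ α : ℝ) (hc : 0 < c) (hτ : 0 < τ) (ρ h : ℝ → ℝ) (M : ℝ)
    (hh01 : ∀ s : ℝ, 0 ≤ s → |h s| ≤ 1)
    (x z : ℝ) (hz : 0 < z)
    (ha : c * z ≤ ∫ t in x..(x+z), ρ t)
    (hb : c * z ≤ ∫ t in (x-z)..x, ρ t)
    (hab : |(∫ t in x..(x+z), ρ t) - (∫ t in (x-z)..x, ρ t)| ≤ M * z ^ 2)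
    (hM0 : 0 ≤ M) :
    |z * (h |z| / (|z| ^ (1+α-τ) * |∫ t in x..(x+z), ρ t| ^ τ))
     + (-z) * (h |(-z)| / (|(-z)| ^ (1+α-τ) * |∫ t in x..(x+(-z)), ρ t| ^ τ))|
    ≤ τ * c ^ (-τ-1) * M * z ^ (1-α) := by
  set a := ∫ t in x..(x+z), ρ t with ha_def
  set b := ∫ t in (x-z)..x, ρ t with hb_def
  have hcz : 0 < c * z := by positivity
  have ha0 : 0 < a := lt_of_lt_of_le hcz ha
  have hb0 : 0 < b := lt_of_lt_of_le hcz hb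
  have hneg : (∫ t in x..(x+(-z)), ρ t) = -b := by
    rw [show x + (-z) = x - z by ring]
    exact intervalIntegral.integral_symm (x - z) x
  have habsz : |z| = z := abs_of_pos hz
  have habsnz : |(-z)| = z := by rw [abs_neg, habsz]
  have habsa : |a| = a := abs_of_pos ha0
  have habsb : |(-b)| = b := by rw [abs_neg, abs_of_pos hb0]
  rw [hneg, habsz, habsnz, habsa, habsb]
  set P := z ^ (1+α-τ) with hP_def
  have hP0 : 0 < P := Real.rpow_pos_of_pos hz _
  have hA0 : 0 < a ^ τ := Real.rpow_pos_of_pos ha0 _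
  have hB0 : 0 < b ^ τ := Real.rpow_pos_of_pos hb0 _
  have eq1 : z * (h z / (P * a ^ τ)) + (-z) * (h z / (P * b ^ τ))
      = (z * h z * P⁻¹) * ((a ^ τ)⁻¹ - (b ^ τ)⁻¹) := by
    field_simp
    ring
  rw [eq1, ← Real.rpow_neg ha0.le, ← Real.rpow_neg hb0.le]
  have hstep : |a ^ (-τ) - b ^ (-τ)| ≤ τ * (c * z) ^ (-τ - 1) * (M * z ^ 2) := by
    calc |a ^ (-τ) - b ^ (-τ)| ≤ τ * (c * z) ^ (-τ - 1) * |a - b| :=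
          aux_inv_rpow_lip hτ hcz ha hb
      _ ≤ τ * (c * z) ^ (-τ - 1) * (M * z ^ 2) := by
          apply mul_le_mul_of_nonneg_left hab
          positivity
  calc |(z * h z * P⁻¹) * (a ^ (-τ) - b ^ (-τ))|
      = z * |h z| * P⁻¹ * |a ^ (-τ) - b ^ (-τ)| := by
        rw [abs_mul, abs_mul, abs_mul, habsz, abs_of_pos (inv_pos.2 hP0)]
    _ ≤ z * 1 * P⁻¹ * (τ * (c * z) ^ (-τ - 1) * (M * z ^ 2)) := by
        gcongr
        exact hh01 z hz.le
    _ = τ * c ^ (-τ-1) * M * z ^ (1-α) := by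
        rw [Real.mul_rpow hc.le hz.le, hP_def, ← Real.rpow_neg hz.le,
          show (z:ℝ) ^ 2 = z ^ ((2:ℕ):ℝ) from (Real.rpow_natCast z 2).symm]
        rw [show z * 1 * z ^ (-(1+α-τ)) * (τ * (c ^ (-τ-1) * z ^ (-τ-1)) * (M * z ^ ((2:ℕ):ℝ)))
            = τ * c ^ (-τ-1) * M * (z ^ (1:ℝ) * z ^ (-(1+α-τ)) * z ^ (-τ-1) * z ^ ((2:ℕ):ℝ)) by
          rw [Real.rpow_one]; ring]
        rw [← Real.rpow_add hz, ← Real.rpow_add hz, ← Real.rpow_add hz]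
        congr 1
        push_cast
        ring

noncomputable def auxF (h ρ : ℝ → ℝ) (τ α : ℝ) (x z : ℝ) : ℝ :=
  z * (h |z| / (|z| ^ (1+α-τ) * |∫ t in x..(x+z), ρ t| ^ τ))

theorem stmt_13 (c C τ α : ℝ) (hc : 0 < c) (hcC : c ≤ C) (hτ : 0 < τ)
    (hα : 0 < α) (hα2 : α < 2) :
    ∃ C' > (0:ℝ), ∀ (ρ h : ℝ → ℝ) (R₀ r : ℝ), 0 < R₀ → 0 < r →
      ContDiff ℝ 1 ρ → Function.Periodic ρ (2*π) →
      (∀ x, c ≤ ρ x ∧ ρ x ≤ C) →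
      ContDiff ℝ (⊤ : ℕ∞) h →
      (∀ s : ℝ, ((if s < R₀ then (1:ℝ) else 0) ≤ h s ∧ h s ≤ if s < 2*R₀ then 1 else 0)) →
      ∃ b : ℝ → ℝ, Continuous b ∧
        (∀ x, Tendsto (fun ε : ℝ =>
            ∫ z in {z : ℝ | ε < |z| ∧ |z| < r},
              z * (h |z| / (|z| ^ (1+α-τ) * |∫ t in x..(x+z), ρ t| ^ τ)))
          (nhdsWithin 0 (Set.Ioi 0)) (nhds (b x))) ∧
        (∀ x, |b x| ≤ C' * sSup (Set.range fun y => |deriv ρ y|) * r ^ (2-α)) := by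
  have h2α : (0:ℝ) < 2 - α := by linarith
  refine ⟨τ * c ^ (-τ-1) / (2-α), by positivity, ?_⟩
  intro ρ h R₀ r hR₀ hr hρ hper hρb hh hhb
  set M := sSup (Set.range fun y => |deriv ρ y|) with hM_def
  have hρc : Continuous ρ := hρ.continuous
  have hdc : Continuous (deriv ρ) := hρ.continuous_deriv le_rfl
  have hperd := aux_periodic_deriv ρ (2*π) hper
  have habsp : Function.Periodic (fun y => |deriv ρ y|) (2*π) := fun x => by
    simp only [hperd x]
  have h2π : (0:ℝ) < 2*π := by positivity
  have hbdd : BddAbove (Set.range fun y => |deriv ρ y|) := by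
    rw [← habsp.image_Icc h2π 0]
    exact (isCompact_Icc.image (continuous_abs.comp hdc)).bddAbove
  have hM : ∀ y, |deriv ρ y| ≤ M := fun y => le_csSup hbdd ⟨y, rfl⟩
  have hM0 : 0 ≤ M := le_trans (abs_nonneg _) (hM 0)
  have hlip := aux_lip hρ hM
  have hh01 : ∀ s : ℝ, 0 ≤ s → |h s| ≤ 1 := by
    intro s _
    obtain ⟨h1, h2⟩ := hhb s
    rw [abs_le]
    constructor
    · calc (-1:ℝ) ≤ if s < R₀ then (1:ℝ) else 0 := by split <;> norm_num
        _ ≤ h s := h1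
    · calc h s ≤ if s < 2*R₀ then (1:ℝ) else 0 := h2
        _ ≤ 1 := by split <;> norm_num
  have hii : ∀ a b : ℝ, IntervalIntegrable ρ volume a b := fun a b => hρc.intervalIntegrable a b
  have hdlow : ∀ (x z : ℝ), 0 < z → c * z ≤ ∫ t in x..(x+z), ρ t := by
    intro x z hz
    have hmono : (∫ t in x..(x+z), (c:ℝ)) ≤ ∫ t in x..(x+z), ρ t := by
      apply intervalIntegral.integral_mono_on (by linarith) intervalIntegrable_const (hii _ _)
      intro t _
      exact (hρb t).1
    rw [intervalIntegral.integral_const] at hmono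
    have : ((x+z) - x) • c = c * z := by
      simp [smul_eq_mul]; ring
    linarith [hmono, this.symm.le]
  have habslow : ∀ (x z : ℝ), z ≠ 0 → c * |z| ≤ |∫ t in x..(x+z), ρ t| := by
    intro x z hz0
    rcases lt_or_gt_of_ne hz0 with hneg | hpos
    · have hlow := hdlow (x+z) (-z) (by linarith)
      rw [show (x+z)+(-z) = x by ring] at hlow
      have hsym : (∫ t in x..(x+z), ρ t) = -(∫ t in (x+z)..x, ρ t) :=
        intervalIntegral.integral_symm (x+z) x
      rw [hsym, abs_neg, abs_of_pos (lt_of_lt_of_le (by nlinarith) hlow), abs_of_neg hneg]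
      linarith
    · have hlow := hdlow x z hpos
      rw [abs_of_pos hpos, abs_of_pos (lt_of_lt_of_le (by positivity) hlow)]
      exact hlow
  have hprim : Continuous (fun y : ℝ => ∫ t in (0:ℝ)..y, ρ t) :=
    intervalIntegral.continuous_primitive hii 0
  have hsub : ∀ x z : ℝ, (∫ t in x..(x+z), ρ t)
      = (∫ t in (0:ℝ)..(x+z), ρ t) - (∫ t in (0:ℝ)..x, ρ t) := fun x z =>
    (intervalIntegral.integral_interval_sub_left (hii 0 (x+z)) (hii 0 x)).symm
  set F : ℝ → ℝ → ℝ := auxF h ρ τ α with hF_def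
  have hFval : ∀ x z : ℝ, F x z = z * (h |z| / (|z| ^ (1+α-τ) * |∫ t in x..(x+z), ρ t| ^ τ)) :=
    fun x z => rfl
  have hden_pos : ∀ (x z : ℝ), z ≠ 0 → 0 < |z| ^ (1+α-τ) * |∫ t in x..(x+z), ρ t| ^ τ := by
    intro x z hz
    have h1 : (0:ℝ) < |z| ^ (1+α-τ) := Real.rpow_pos_of_pos (abs_pos.2 hz) _
    have h2 : (0:ℝ) < |∫ t in x..(x+z), ρ t| ^ τ :=
      Real.rpow_pos_of_pos (lt_of_lt_of_le (mul_pos hc (abs_pos.2 hz)) (habslow x z hz)) _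
    positivity
  have hd_cont : ∀ z : ℝ, Continuous (fun x => ∫ t in x..(x+z), ρ t) := by
    intro z
    have he : (fun x => ∫ t in x..(x+z), ρ t)
        = fun x => (∫ t in (0:ℝ)..(x+z), ρ t) - (∫ t in (0:ℝ)..x, ρ t) :=
      funext (fun x => hsub x z)
    rw [he]
    exact (hprim.comp (continuous_id.add continuous_const)).sub hprim
  have hFx_cont : ∀ z : ℝ, z ≠ 0 → Continuous (fun x => F x z) := by
    intro z hz0
    simp only [hFval]
    apply continuous_const.mul
    apply Continuous.div continuous_const
    · exact continuous_const.mul (((hd_cont z).abs).rpow_const (fun x => Or.inr hτ.le))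
    · exact fun x => (hden_pos x z hz0).ne'
  have hd_cont2 : ∀ x : ℝ, Continuous fun z : ℝ => ∫ t in x..(x+z), ρ t := by
    intro x
    have he : (fun z : ℝ => ∫ t in x..(x+z), ρ t)
        = fun z => (∫ t in (0:ℝ)..(x+z), ρ t) - (∫ t in (0:ℝ)..x, ρ t) :=
      funext (fun z => hsub x z)
    rw [he]
    exact (hprim.comp (continuous_const.add continuous_id)).sub continuous_const
  have hFz_cont : ∀ x : ℝ, ContinuousOn (fun z => F x z) {z : ℝ | z ≠ 0} := by
    intro x
    simp only [hFval]
    apply ContinuousOn.mul continuousOn_id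
    apply ContinuousOn.div
    · exact (hh.continuous.comp continuous_abs).continuousOn
    · apply ContinuousOn.mul
      · exact ContinuousOn.rpow_const continuous_abs.continuousOn
          (fun z hz => Or.inl (abs_ne_zero.2 hz))
      · exact (((hd_cont2 x).abs).rpow_const (fun z => Or.inr hτ.le)).continuousOn
    · exact fun z hz => (hden_pos x z hz).ne'
  have hkey : ∀ x z : ℝ, 0 < z → |F x z + F x (-z)| ≤ τ * c ^ (-τ-1) * M * z ^ (1-α) := by
    intro x z hz
    have hb' : c * z ≤ ∫ t in (x-z)..x, ρ t := by
      have := hdlow (x-z) z hz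
      rwa [show (x-z)+z = x by ring] at this
    exact aux_key c τ α hc hτ ρ h M hh01 x z hz (hdlow x z hz) hb'
      (aux_d_diff ρ hρc M hlip x z hz.le) hM0
  have hB_int : ∀ s : Set ℝ, MeasurableSet s → s ⊆ Set.Ioc 0 r →
      IntegrableOn (fun z : ℝ => τ * c ^ (-τ-1) * M * z ^ (1-α)) s := by
    intro s _ hs
    have h1 : IntegrableOn (fun z : ℝ => z ^ (1-α)) (Set.Ioc 0 r) :=
      (intervalIntegral.intervalIntegrable_rpow' (by linarith)).1
    exact ((h1.mono_set hs).const_mul _)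
  have hg_meas : ∀ x : ℝ, AEStronglyMeasurable (fun z => F x z + F x (-z))
      (volume.restrict (Set.Ioo 0 r)) := by
    intro x
    apply ContinuousOn.aestronglyMeasurable _ measurableSet_Ioo
    apply ContinuousOn.add
    · exact (hFz_cont x).mono (fun z hz => ne_of_gt hz.1)
    · exact (hFz_cont x).comp continuous_neg.continuousOn
        (fun z (hz : z ∈ Set.Ioo 0 r) => (neg_ne_zero.2 (ne_of_gt hz.1) : (-z : ℝ) ≠ 0))
  have hg_bound : ∀ x : ℝ, ∀ᵐ z ∂(volume.restrict (Set.Ioo 0 r)),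
      ‖F x z + F x (-z)‖ ≤ τ * c ^ (-τ-1) * M * z ^ (1-α) := by
    intro x
    rw [MeasureTheory.ae_restrict_iff' measurableSet_Ioo]
    exact Filter.Eventually.of_forall (fun z hz => by
      rw [Real.norm_eq_abs]; exact hkey x z hz.1)
  have hg_int : ∀ x : ℝ, IntegrableOn (fun z => F x z + F x (-z)) (Set.Ioo 0 r) := fun x =>
    Integrable.mono' (hB_int _ measurableSet_Ioo Set.Ioo_subset_Ioc_self) (hg_meas x) (hg_bound x)
  have hIoc_int : ∀ (p : ℝ) (_ : p ∈ Set.Ioc (0:ℝ) r),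
      ∫ z in Set.Ioc (0:ℝ) p, (z : ℝ) ^ (1-α) = p ^ (2-α) / (2-α) := by
    intro p hp
    rw [← intervalIntegral.integral_of_le hp.1.le]
    rw [integral_rpow (Or.inl (by linarith))]
    rw [show (1:ℝ) - α + 1 = 2 - α by ring, Real.zero_rpow (by linarith : (2:ℝ) - α ≠ 0)]
    ring
  refine ⟨fun x => ∫ z in Set.Ioo 0 r, (F x z + F x (-z)), ?_, ?_, ?_⟩
  · exact continuous_of_dominated hg_meas hg_bound
      (hB_int _ measurableSet_Ioo Set.Ioo_subset_Ioc_self)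
      (by
        rw [MeasureTheory.ae_restrict_iff' measurableSet_Ioo]
        exact Filter.Eventually.of_forall (fun z hz =>
          ((hFx_cont z (ne_of_gt hz.1)).add (hFx_cont (-z) (neg_ne_zero.2 (ne_of_gt hz.1))))))
  · -- tendsto
    intro x
    have hrw : ∀ ε : ℝ, (∫ z in {z : ℝ | ε < |z| ∧ |z| < r},
        z * (h |z| / (|z| ^ (1+α-τ) * |∫ t in x..(x+z), ρ t| ^ τ)))
        = ∫ z in {z : ℝ | ε < |z| ∧ |z| < r}, F x z := fun ε => rfl
    simp only [hrw]
    rw [← tendsto_sub_nhds_zero_iff]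
    have hmem : Set.Ioo (0:ℝ) r ∈ 𝓝[>] (0:ℝ) := Ioo_mem_nhdsGT_of_mem ⟨le_refl 0, hr⟩
    refine squeeze_zero_norm' (a := fun ε : ℝ => τ * c ^ (-τ-1) * M * (ε ^ (2-α) / (2-α))) ?_ ?_
    · filter_upwards [hmem] with ε hε
      -- rewrite the set integral
      have hS : {z : ℝ | ε < |z| ∧ |z| < r} = Set.Ioo (-r) (-ε) ∪ Set.Ioo ε r := by
        ext z
        simp only [Set.mem_setOf_eq, Set.mem_union, Set.mem_Ioo, lt_abs, abs_lt]
        constructor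
        · rintro ⟨h1 | h1, h2, h3⟩
          · right; exact ⟨h1, h3⟩
          · left; exact ⟨h2, by linarith⟩
        · rintro (⟨h1, h2⟩ | ⟨h1, h2⟩)
          · exact ⟨Or.inr (by linarith), by linarith, by linarith [hε.1]⟩
          · exact ⟨Or.inl h1, by linarith [hε.1], h2⟩
      have hIcc1 : Set.Icc ε r ⊆ {z : ℝ | z ≠ 0} :=
        fun z hz => ne_of_gt (lt_of_lt_of_le hε.1 hz.1)
      have hF1 : IntegrableOn (fun z => F x z) (Set.Ioo ε r) :=
        (((hFz_cont x).mono hIcc1).integrableOn_Icc).mono_set Set.Ioo_subset_Icc_self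
      have hF2 : IntegrableOn (fun z => F x z) (Set.Ioo (-r) (-ε)) := by
        refine (((hFz_cont x).mono ?_).integrableOn_Icc).mono_set Set.Ioo_subset_Icc_self
        intro z hz
        exact ne_of_lt (lt_of_le_of_lt hz.2 (by linarith [hε.1]))
      have hF3 : IntegrableOn (fun z => F x (-z)) (Set.Ioo ε r) := by
        refine ((ContinuousOn.integrableOn_Icc ?_)).mono_set Set.Ioo_subset_Icc_self
        exact (hFz_cont x).comp continuous_neg.continuousOn
          (fun z hz => (neg_ne_zero.2 (hIcc1 hz) : (-z : ℝ) ≠ 0))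
      have hdisj2 : Disjoint (Set.Ioo (-r) (-ε)) (Set.Ioo ε r) := by
        apply Set.disjoint_left.2
        rintro z ⟨_, h1⟩ ⟨h2, _⟩
        linarith [hε.1]
      have hval : (∫ z in {z : ℝ | ε < |z| ∧ |z| < r}, F x z)
          = ∫ z in Set.Ioo ε r, (F x z + F x (-z)) := by
        rw [hS, MeasureTheory.setIntegral_union hdisj2 measurableSet_Ioo hF2 hF1]
        have e1 : (∫ z in Set.Ioo (-r) (-ε), F x z) = ∫ z in Set.Ioo ε r, F x (-z) := by
          rw [← MeasureTheory.integral_Ioc_eq_integral_Ioo,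
            ← intervalIntegral.integral_of_le (by linarith [hε.1, hε.2] : -r ≤ -ε),
            ← MeasureTheory.integral_Ioc_eq_integral_Ioo,
            ← intervalIntegral.integral_of_le hε.2.le,
            intervalIntegral.integral_comp_neg]
        rw [e1, add_comm, ← MeasureTheory.integral_add hF1 hF3]
      rw [hval]
      -- split off Ioc 0 ε
      have hsub1 : Set.Ioc 0 ε ⊆ Set.Ioo 0 r := fun z hz => ⟨hz.1, lt_of_le_of_lt hz.2 hε.2⟩
      have hsub2 : Set.Ioo ε r ⊆ Set.Ioo 0 r := fun z hz => ⟨lt_trans hε.1 hz.1, hz.2⟩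
      have hdisj3 : Disjoint (Set.Ioc 0 ε) (Set.Ioo ε r) := by
        apply Set.disjoint_left.2
        rintro z ⟨_, h1⟩ ⟨h2, _⟩
        linarith
      have hsplit : (∫ z in Set.Ioo 0 r, (F x z + F x (-z)))
          = (∫ z in Set.Ioc 0 ε, (F x z + F x (-z))) + ∫ z in Set.Ioo ε r, (F x z + F x (-z)) := by
        rw [← MeasureTheory.setIntegral_union hdisj3 measurableSet_Ioo
          ((hg_int x).mono_set hsub1) ((hg_int x).mono_set hsub2),
          Set.Ioc_union_Ioo_eq_Ioo hε.1.le hε.2]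
      have hnorm : ‖(∫ z in Set.Ioo ε r, (F x z + F x (-z)))
          - ∫ z in Set.Ioo 0 r, (F x z + F x (-z))‖
          = ‖∫ z in Set.Ioc 0 ε, (F x z + F x (-z))‖ := by
        rw [hsplit]
        rw [show (∫ z in Set.Ioo ε r, (F x z + F x (-z)))
            - ((∫ z in Set.Ioc 0 ε, (F x z + F x (-z))) + ∫ z in Set.Ioo ε r, (F x z + F x (-z)))
            = -(∫ z in Set.Ioc 0 ε, (F x z + F x (-z))) by ring, norm_neg]
      rw [hnorm]
      have hbd : ∀ᵐ z ∂(volume.restrict (Set.Ioc 0 ε)),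
          ‖F x z + F x (-z)‖ ≤ τ * c ^ (-τ-1) * M * z ^ (1-α) := by
        rw [MeasureTheory.ae_restrict_iff' measurableSet_Ioc]
        exact Filter.Eventually.of_forall (fun z hz => by
          rw [Real.norm_eq_abs]; exact hkey x z hz.1)
      have hIocε : Set.Ioc (0:ℝ) ε ⊆ Set.Ioc 0 r := fun z hz => ⟨hz.1, hz.2.trans hε.2.le⟩
      calc ‖∫ z in Set.Ioc 0 ε, (F x z + F x (-z))‖
          ≤ ∫ z in Set.Ioc 0 ε, τ * c ^ (-τ-1) * M * z ^ (1-α) :=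
            MeasureTheory.norm_integral_le_of_norm_le (hB_int _ measurableSet_Ioc hIocε) hbd
        _ = τ * c ^ (-τ-1) * M * (ε ^ (2-α) / (2-α)) := by
            rw [MeasureTheory.integral_const_mul, hIoc_int ε ⟨hε.1, hε.2.le⟩]
    · -- tendsto of the bound to 0
      have h1 : Tendsto (fun ε : ℝ => ε ^ (2-α)) (𝓝[>] (0:ℝ)) (𝓝 (0:ℝ)) := by
        have := (Real.continuousAt_rpow_const 0 (2-α) (Or.inr (by linarith))).tendsto
        rw [Real.zero_rpow (by linarith : (2:ℝ) - α ≠ 0)] at this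
        exact this.mono_left nhdsWithin_le_nhds
      have h2 := ((h1.div_const (2-α)).const_mul (τ * c ^ (-τ-1) * M))
      simpa using h2
  · -- bound
    intro x
    have hle : ‖∫ z in Set.Ioo 0 r, (F x z + F x (-z))‖
        ≤ ∫ z in Set.Ioo 0 r, τ * c ^ (-τ-1) * M * z ^ (1-α) :=
      MeasureTheory.norm_integral_le_of_norm_le
        (hB_int _ measurableSet_Ioo Set.Ioo_subset_Ioc_self) (hg_bound x)
    have heq : (∫ z in Set.Ioo 0 r, τ * c ^ (-τ-1) * M * z ^ (1-α))
        = τ * c ^ (-τ-1) * M * (r ^ (2-α) / (2-α)) := by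
      rw [MeasureTheory.integral_const_mul, ← MeasureTheory.integral_Ioc_eq_integral_Ioo,
        hIoc_int r ⟨hr, le_refl r⟩]
    rw [← Real.norm_eq_abs]
    calc ‖∫ z in Set.Ioo 0 r, (F x z + F x (-z))‖
        ≤ τ * c ^ (-τ-1) * M * (r ^ (2-α) / (2-α)) := by rw [← heq]; exact hle
      _ = τ * c ^ (-τ-1) / (2-α) * M * r ^ (2-α) := by ring
end

section
/- Let g : 𝕋 → ℝ be C¹ and 0 < α < 2. Define D_α g(x) = ∫_{|z|<R} |g(x+z) − g(x)|²/|z|^{1+α} dz for fixed R > 0. Then for all x and all z with |z| < R: |g(x+z) − g(x) − g′(x)·z| ≤ √(D_α g′(x)) · |z|^{1+α/2} / √(1+α) — in particular the second-order Taylor remainder of the antiderivative is controlled pointwise by the local fractional dissipation of the derivative. -/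
/-!
By Taylor's formula with integral remainder, `g (x + z) - g x - g' x * z` is the integral of
`g' (x + w) - g' x` over `w` between `0` and `z`. Cauchy–Schwarz with the weight `|w| ^ (1 + α)`
bounds it by the square root of the local dissipation `D_α g' x` times
`(∫₀^|z| w ^ (1 + α) dw) ^ (1/2) = |z| ^ (1 + α/2) / √(2 + α)`, and `√(2 + α) ≥ √(1 + α)`.
-/

open MeasureTheory Set Interval

theorem ContDiff.sub_sub_deriv_mul_eq_intervalIntegral {g : ℝ → ℝ} (hg : ContDiff ℝ 1 g)
    (x z : ℝ) :
    g (x + z) - g x - deriv g x * z = ∫ w in 0..z, (deriv g (x + w) - deriv g x) := by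
  have hg' : Continuous (deriv g) := hg.continuous_deriv le_rfl
  have hshift : Continuous fun w => deriv g (x + w) := hg'.comp (continuous_const_add x)
  rw [intervalIntegral.integral_sub (hshift.intervalIntegrable _ _) intervalIntegrable_const,
    intervalIntegral.integral_comp_add_left (deriv g) x, add_zero,
    intervalIntegral.integral_deriv_eq_sub
      (fun u _ => (hg.differentiable one_ne_zero).differentiableAt) (hg'.intervalIntegrable _ _)]
  simp [mul_comm]

theorem ofReal_abs_intervalIntegral_le_lintegral_uIoc (f : ℝ → ℝ) (a b : ℝ) :
    ENNReal.ofReal |∫ w in a..b, f w| ≤ ∫⁻ w in Ι a b, ENNReal.ofReal |f w| := by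
  simp only [intervalIntegral.abs_integral_eq_abs_integral_uIoc, ← Real.enorm_eq_ofReal_abs]
  exact enorm_integral_le_lintegral_enorm _

theorem lintegral_ofReal_abs_le_weighted_cauchySchwarz {f : ℝ → ℝ} (hf : Measurable f)
    (s : Set ℝ) (q : ℝ) :
    ∫⁻ w in s, ENNReal.ofReal |f w| ≤
      (∫⁻ w in s, ENNReal.ofReal (f w ^ 2 / |w| ^ q)) ^ ((1 : ℝ) / 2) *
        (∫⁻ w in s, ENNReal.ofReal (|w| ^ q)) ^ ((1 : ℝ) / 2) := by
  set F : ℝ → ENNReal := fun w => ENNReal.ofReal (|f w| / |w| ^ (q / 2))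
  set G : ℝ → ENNReal := fun w => ENNReal.ofReal (|w| ^ (q / 2))
  have hsq (w : ℝ) : (|w| ^ (q / 2)) ^ (2 : ℝ) = |w| ^ q := by
    rw [← Real.rpow_mul (abs_nonneg w)]; ring_nf
  have hF (w : ℝ) : F w ^ (2 : ℝ) = ENNReal.ofReal (f w ^ 2 / |w| ^ q) := by
    rw [ENNReal.ofReal_rpow_of_nonneg (by positivity) zero_le_two, Real.div_rpow (abs_nonneg _)
      (by positivity), hsq, Real.rpow_two, sq_abs]
  have hG (w : ℝ) : G w ^ (2 : ℝ) = ENNReal.ofReal (|w| ^ q) := by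
    rw [ENNReal.ofReal_rpow_of_nonneg (by positivity) zero_le_two, hsq]
  have hFG : ∀ᵐ w ∂volume.restrict s, ENNReal.ofReal |f w| = (F * G) w := by
    filter_upwards [ae_restrict_of_ae (Measure.ae_ne volume 0)] with w hw
    have hpos : 0 < |w| ^ (q / 2) := Real.rpow_pos_of_pos (abs_pos.2 hw) _
    rw [Pi.mul_apply, ← ENNReal.ofReal_mul (by positivity), div_mul_cancel₀ _ hpos.ne']
  calc ∫⁻ w in s, ENNReal.ofReal |f w| = ∫⁻ w in s, (F * G) w := lintegral_congr_ae hFG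
    _ ≤ (∫⁻ w in s, F w ^ (2 : ℝ)) ^ ((1 : ℝ) / 2) *
          (∫⁻ w in s, G w ^ (2 : ℝ)) ^ ((1 : ℝ) / 2) :=
      ENNReal.lintegral_mul_le_Lp_mul_Lq _ Real.HolderConjugate.two_two
        (by fun_prop) (by fun_prop)
    _ = _ := by simp only [hF, hG]

theorem setIntegral_uIoc_zero_comp_abs {f : ℝ → ℝ} (z : ℝ) :
    ∫ w in Ι 0 z, f |w| = ∫ w in 0..|z|, f w := by
  rcases le_or_gt 0 z with hz | hz
  · rw [uIoc_of_le hz, abs_of_nonneg hz, intervalIntegral.integral_of_le hz]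
    exact setIntegral_congr_fun measurableSet_Ioc fun w hw => by rw [abs_of_pos hw.1]
  · rw [uIoc_of_ge hz.le, abs_of_neg hz, ← neg_zero, ← intervalIntegral.integral_comp_neg,
      intervalIntegral.integral_of_le hz.le, neg_zero]
    exact setIntegral_congr_fun measurableSet_Ioc fun w hw => by rw [abs_of_nonpos hw.2]

theorem integral_uIoc_zero_abs_rpow {a : ℝ} (ha : -1 < a) (z : ℝ) :
    ∫ w in Ι 0 z, |w| ^ a = |z| ^ (a + 1) / (a + 1) := by
  rw [setIntegral_uIoc_zero_comp_abs (f := fun w => w ^ a), integral_rpow (Or.inl ha),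
    Real.zero_rpow (by linarith), sub_zero]

theorem lintegral_uIoc_zero_abs_rpow {a : ℝ} (ha : -1 < a) (z : ℝ) :
    ∫⁻ w in Ι 0 z, ENNReal.ofReal (|w| ^ a) = ENNReal.ofReal (|z| ^ (a + 1) / (a + 1)) := by
  have ha' : 0 < a + 1 := by linarith
  rcases eq_or_ne z 0 with rfl | hz
  · simp [Real.zero_rpow ha'.ne']
  have hint : IntegrableOn (fun w => |w| ^ a) (Ι 0 z) := by
    refine Integrable.of_integral_ne_zero ?_
    rw [integral_uIoc_zero_abs_rpow ha]
    positivity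
  rw [← ofReal_integral_eq_lintegral_ofReal hint (ae_of_all _ fun w => by positivity),
    integral_uIoc_zero_abs_rpow ha]

theorem lintegral_uIoc_zero_abs_rpow_sqrt_le {α : ℝ} (hα : -1 < α) (z : ℝ) :
    (∫⁻ w in Ι 0 z, ENNReal.ofReal (|w| ^ (1 + α))) ^ ((1 : ℝ) / 2) ≤
      ENNReal.ofReal (|z| ^ (1 + α / 2) / √(1 + α)) := by
  have hsqrt : √(|z| ^ (1 + α + 1)) = |z| ^ (1 + α / 2) := by
    rw [Real.sqrt_eq_rpow, ← Real.rpow_mul (abs_nonneg z)]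
    ring_nf
  have hα' : 0 < 1 + α := by linarith
  rw [lintegral_uIoc_zero_abs_rpow (by linarith), ENNReal.ofReal_rpow_of_nonneg (by positivity)
    (by norm_num), ← Real.sqrt_eq_rpow, Real.sqrt_div' _ (by linarith), hsqrt]
  exact ENNReal.ofReal_le_ofReal <| div_le_div_of_nonneg_left (by positivity)
    (Real.sqrt_pos.2 hα') (Real.sqrt_le_sqrt (by linarith))

theorem stmt_14_general (g : ℝ → ℝ) (hg : ContDiff ℝ 1 g) (α R : ℝ)
    (hα : 0 < α) :
    ∀ x z : ℝ, |z| < R →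
      ENNReal.ofReal |g (x+z) - g x - deriv g x * z| ≤
        (∫⁻ w in Set.Ioo (-R) R,
            ENNReal.ofReal ((deriv g (x+w) - deriv g x)^2 / |w| ^ (1+α))) ^ ((1:ℝ)/2)
          * ENNReal.ofReal (|z| ^ (1 + α/2) / Real.sqrt (1+α)) := by
  intro x z hz
  have hsub : Ι 0 z ⊆ Ioo (-R) R := by
    obtain ⟨hz₁, hz₂⟩ := abs_lt.1 hz
    rw [uIoc_eq_union]
    rintro w (⟨hw₁, hw₂⟩ | ⟨hw₁, hw₂⟩) <;> constructor <;> linarith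
  have hderiv : Measurable fun w => deriv g (x + w) - deriv g x :=
    ((hg.continuous_deriv le_rfl).comp (continuous_const_add x)).measurable.sub_const _
  calc ENNReal.ofReal |g (x + z) - g x - deriv g x * z|
      ≤ ∫⁻ w in Ι 0 z, ENNReal.ofReal |deriv g (x + w) - deriv g x| := by
        rw [hg.sub_sub_deriv_mul_eq_intervalIntegral]
        exact ofReal_abs_intervalIntegral_le_lintegral_uIoc _ _ _
    _ ≤ (∫⁻ w in Ι 0 z, ENNReal.ofReal ((deriv g (x + w) - deriv g x) ^ 2 / |w| ^ (1 + α))) ^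
            ((1 : ℝ) / 2) * (∫⁻ w in Ι 0 z, ENNReal.ofReal (|w| ^ (1 + α))) ^ ((1 : ℝ) / 2) :=
        lintegral_ofReal_abs_le_weighted_cauchySchwarz hderiv _ _
    _ ≤ _ := by
        gcongr ?_ ^ _ * ?_
        · exact lintegral_mono_set hsub
        · exact lintegral_uIoc_zero_abs_rpow_sqrt_le (by linarith) z

theorem stmt_14 (g : ℝ → ℝ) (hg : ContDiff ℝ 1 g) (α R : ℝ)
    (hα : 0 < α) (hα2 : α < 2) (hR : 0 < R) :
    ∀ x z : ℝ, |z| < R →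
      ENNReal.ofReal |g (x+z) - g x - deriv g x * z| ≤
        (∫⁻ w in Set.Ioo (-R) R,
            ENNReal.ofReal ((deriv g (x+w) - deriv g x)^2 / |w| ^ (1+α))) ^ ((1:ℝ)/2)
          * ENNReal.ofReal (|z| ^ (1 + α/2) / Real.sqrt (1+α)) :=
  stmt_14_general g hg α R hα
end
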